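/- arXiv:2209.03931 — 2 statements merged into one kernel-verified Lean document; each statement's English description precedes it below -/
import Mathlib

section
/- For any connected graphs G and H, v_s(G)·v_s(H) ≤ γ_P(G □ H), where v_s denotes the number of strong support vertices. -/
namespace PaperPD

open SimpleGraph

variable {V : Type} {W : Type}

/-- Observation process for power domination on a simple graph. -/
inductive Observed (G : SimpleGraph V) (S : Set V) : V → Prop
  | mem : ∀ v ∈ S, Observed G S v
  | dom : ∀ u v, u ∈ S → G.Adj u v → Observed G S v
  | prop : ∀ u v, Observed G S u → G.Adj u v →
      (∀ w, G.Adj u w → w ≠ v → Observed G S w) → Observed G S v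

/-- `S` is a power dominating set of `G`. -/
def IsPDS (G : SimpleGraph V) (S : Set V) : Prop := ∀ v, Observed G S v

/-- Power domination number. -/
noncomputable def pdNum (G : SimpleGraph V) [Fintype V] : ℕ :=
  sInf {n | ∃ S : Finset V, S.card = n ∧ IsPDS G ↑S}

/-- Zero forcing process. -/
inductive Forced (G : SimpleGraph V) (S : Set V) : V → Prop
  | mem : ∀ v ∈ S, Forced G S v
  | prop : ∀ u v, Forced G S u → G.Adj u v →
      (∀ w, G.Adj u w → w ≠ v → Forced G S w) → Forced G S v

/-- Zero forcing number. -/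
noncomputable def zNum (G : SimpleGraph V) [Fintype V] : ℕ :=
  sInf {n | ∃ S : Finset V, S.card = n ∧ ∀ v, Forced G S v}

/-- Domination number. -/
noncomputable def domNum (G : SimpleGraph V) [Fintype V] : ℕ :=
  sInf {n | ∃ S : Finset V, S.card = n ∧ ∀ v, ∃ u ∈ S, v = u ∨ G.Adj u v}

/-- No induced `K_{1,3}`. -/
def ClawFree (G : SimpleGraph V) : Prop :=
  ∀ x a b c : V, a ≠ b → a ≠ c → b ≠ c →
    G.Adj x a → G.Adj x b → G.Adj x c →
    ¬ G.Adj a b → ¬ G.Adj a c → ¬ G.Adj b c → False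

/-- No induced `K₄` minus an edge. -/
def DiamondFree (G : SimpleGraph V) : Prop :=
  ∀ a b c d : V, a ≠ b → a ≠ c → a ≠ d → b ≠ c → b ≠ d → c ≠ d →
    G.Adj a b → G.Adj a c → G.Adj b c → G.Adj b d → G.Adj c d →
    ¬ G.Adj a d → False

/-- A leaf: a vertex with exactly one neighbor. -/
def IsLeaf (G : SimpleGraph V) (v : V) : Prop := ∃! u, G.Adj v u

/-- A strong support vertex: adjacent to at least two leaves. -/
def IsStrongSupport (G : SimpleGraph V) (x : V) : Prop :=
  ∃ a b, a ≠ b ∧ G.Adj x a ∧ G.Adj x b ∧ IsLeaf G a ∧ IsLeaf G b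

/-- Number of strong support vertices. -/
noncomputable def ssCount (G : SimpleGraph V) : ℕ :=
  Nat.card {v // IsStrongSupport G v}

/-- Connected with no bridges. -/
def TwoEdgeConnected (G : SimpleGraph V) : Prop :=
  G.Connected ∧ ∀ e, ¬ G.IsBridge e

/-- A loopless multigraph, given by symmetric edge multiplicities. -/
structure Multigraph (W : Type) where
  mult : W → W → ℕ
  symm : ∀ u v, mult u v = mult v u
  loopless : ∀ v, mult v v = 0

/-- Underlying simple graph of a multigraph. -/
def Multigraph.toSimple (M : Multigraph W) : SimpleGraph W where
  Adj u v := u ≠ v ∧ 0 < M.mult u v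
  symm := by constructor; intro u v h; exact ⟨h.1.symm, by rw [M.symm]; exact h.2⟩
  loopless := by constructor; intro v h; exact h.1 rfl

/-- Degree of a vertex in a multigraph (counting multiplicities). -/
def Multigraph.degree [Fintype W] (M : Multigraph W) (v : W) : ℕ :=
  ∑ u, M.mult v u

/-- Bridgeless multigraph: no single edge is a cut edge (a parallel edge
is never a bridge). -/
def Multigraph.Bridgeless (M : Multigraph W) : Prop :=
  ∀ u v, M.mult u v = 1 → ¬ M.toSimple.IsBridge s(u, v)

/-- A 2-factor of a multigraph, given by sub-multiplicities. -/
def Multigraph.IsTwoFactor [Fintype W] (M : Multigraph W) (f : W → W → ℕ) : Prop :=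
  (∀ u v, f u v ≤ M.mult u v) ∧ (∀ u v, f u v = f v u) ∧ (∀ v, ∑ u, f v u = 2)

/-- Observation process for power domination on a multigraph: propagation
only happens along single edges. -/
inductive MObserved (M : Multigraph W) (S : Set W) : W → Prop
  | mem : ∀ v ∈ S, MObserved M S v
  | dom : ∀ u v, u ∈ S → 0 < M.mult u v → MObserved M S v
  | prop : ∀ u v, MObserved M S u → M.mult u v = 1 →
      (∀ w, 0 < M.mult u w → w ≠ v → MObserved M S w) → MObserved M S v

/-- Power domination number of a multigraph. -/
noncomputable def mpdNum (M : Multigraph W) [Fintype W] : ℕ :=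
  sInf {n | ∃ S : Finset W, S.card = n ∧ ∀ v, MObserved M ↑S v}

/-!
If `x` and `y` are strong supports with leaves `a, b` and `c, d`, then `{a, b} ×ˢ {c, d}` is a
fort of `G □ H`, so every power dominating set meets its closed neighbourhood, which lies in the
product of the leaf stars of `x` and `y`. The leaf stars of distinct strong supports are disjoint,
so distinct pairs `(x, y)` use distinct vertices of the power dominating set.
-/

def IsFort (G : SimpleGraph V) (F : Set V) : Prop :=
  ∀ u ∉ F, ∀ v ∈ F, G.Adj u v → ∃ w ∈ F, w ≠ v ∧ G.Adj u w

/-- Nothing in the fort is dominated, and a vertex outside it never has a unique unobserved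
neighbour inside it. -/
theorem Observed.not_mem_of_isFort {G : SimpleGraph V} {S F : Set V} (hF : IsFort G F)
    (hS : ∀ s ∈ S, ∀ f ∈ F, s ≠ f ∧ ¬ G.Adj s f) {v : V} (hv : Observed G S v) : v ∉ F := by
  induction hv with
  | mem v hvS => exact fun hvF => (hS v hvS v hvF).1 rfl
  | dom u v huS huv => exact fun hvF => (hS u huS v hvF).2 huv
  | prop u v _ huv _ ihu ihw =>
    intro hvF
    obtain ⟨w, hwF, hwv, huw⟩ := hF u ihu v hvF huv
    exact ihw w huw hwv hwF

theorem IsPDS.exists_near_of_isFort {G : SimpleGraph V} {S F : Set V} (hS : IsPDS G S)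
    (hF : IsFort G F) {v : V} (hv : v ∈ F) : ∃ s ∈ S, ∃ f ∈ F, s = f ∨ G.Adj s f := by
  by_contra! h
  exact (hS v).not_mem_of_isFort hF h hv

theorem IsFort.prod {G : SimpleGraph V} {H : SimpleGraph W} {F₁ : Set V} {F₂ : Set W}
    (h₁ : IsFort G F₁) (h₂ : IsFort H F₂) : IsFort (G □ H) (F₁ ×ˢ F₂) := by
  rintro ⟨u₁, u₂⟩ hu ⟨v₁, v₂⟩ ⟨hv₁, hv₂⟩ huv
  rcases boxProd_adj.mp huv with ⟨huv₁, rfl⟩ | ⟨huv₂, rfl⟩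
  · obtain ⟨w, hw, hwv, huw⟩ := h₁ u₁ (fun h => hu ⟨h, hv₂⟩) v₁ hv₁ huv₁
    exact ⟨(w, u₂), ⟨hw, hv₂⟩, fun h => hwv (congrArg Prod.fst h),
      boxProd_adj.mpr (.inl ⟨huw, rfl⟩)⟩
  · obtain ⟨w, hw, hwv, huw⟩ := h₂ u₂ (fun h => hu ⟨hv₁, h⟩) v₂ hv₂ huv₂
    exact ⟨(u₁, w), ⟨hv₁, hw⟩, fun h => hwv (congrArg Prod.snd h),
      boxProd_adj.mpr (.inr ⟨huw, rfl⟩)⟩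

theorem IsLeaf.eq_of_adj {G : SimpleGraph V} {a x y : V} (ha : IsLeaf G a) (hx : G.Adj a x)
    (hy : G.Adj a y) : x = y :=
  ha.unique hx hy

theorem IsStrongSupport.not_isLeaf {G : SimpleGraph V} {x : V} (hx : IsStrongSupport G x) :
    ¬ IsLeaf G x := by
  obtain ⟨a, b, hab, hxa, hxb, -, -⟩ := hx
  exact fun hx => hab (hx.eq_of_adj hxa hxb)

theorem isFort_pair_of_isLeaf {G : SimpleGraph V} {x a b : V} (hab : a ≠ b) (hxa : G.Adj x a)
    (hxb : G.Adj x b) (ha : IsLeaf G a) (hb : IsLeaf G b) : IsFort G {a, b} := by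
  rintro u - v (rfl | rfl) huv
  · exact ⟨b, .inr rfl, hab.symm, ha.eq_of_adj huv.symm hxa.symm ▸ hxb⟩
  · exact ⟨a, .inl rfl, hab, hb.eq_of_adj huv.symm hxb.symm ▸ hxa⟩

def leafStar (G : SimpleGraph V) (x : V) : Set V := insert x {a | G.Adj x a ∧ IsLeaf G a}

theorem mem_leafStar_of_adj_isLeaf {G : SimpleGraph V} {x a s : V} (hxa : G.Adj x a)
    (ha : IsLeaf G a) (hs : s = a ∨ G.Adj s a) : s ∈ leafStar G x := by
  rcases hs with rfl | hsa
  · exact .inr ⟨hxa, ha⟩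
  · exact .inl (ha.eq_of_adj hsa.symm hxa.symm)

theorem eq_of_mem_leafStar {G : SimpleGraph V} {x x' z : V} (hx : ¬ IsLeaf G x)
    (hx' : ¬ IsLeaf G x') (hz : z ∈ leafStar G x) (hz' : z ∈ leafStar G x') : x = x' := by
  rcases hz with rfl | ⟨hzx, hz⟩ <;> rcases hz' with rfl | ⟨hzx', hz'⟩
  · rfl
  · exact absurd hz' hx
  · exact absurd hz hx'
  · exact hz.eq_of_adj hzx.symm hzx'.symm

theorem eq_or_adj_of_eq_or_boxProd_adj {G : SimpleGraph V} {H : SimpleGraph W} {s f : V × W}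
    (h : s = f ∨ (G □ H).Adj s f) :
    (s.1 = f.1 ∨ G.Adj s.1 f.1) ∧ (s.2 = f.2 ∨ H.Adj s.2 f.2) := by
  rcases h with rfl | h
  · exact ⟨.inl rfl, .inl rfl⟩
  · rcases boxProd_adj.mp h with ⟨h₁, h₂⟩ | ⟨h₂, h₁⟩
    · exact ⟨.inr h₁, .inl h₂⟩
    · exact ⟨.inl h₁, .inr h₂⟩

theorem IsPDS.exists_mem_leafStar_prod {G : SimpleGraph V} {H : SimpleGraph W} {S : Set (V × W)}
    (hS : IsPDS (G □ H) S) {x : V} {y : W} (hx : IsStrongSupport G x)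
    (hy : IsStrongSupport H y) : ∃ s ∈ S, s.1 ∈ leafStar G x ∧ s.2 ∈ leafStar H y := by
  obtain ⟨a, b, hab, hxa, hxb, ha, hb⟩ := hx
  obtain ⟨c, d, hcd, hyc, hyd, hc, hd⟩ := hy
  have hF :=
    (isFort_pair_of_isLeaf hab hxa hxb ha hb).prod (isFort_pair_of_isLeaf hcd hyc hyd hc hd)
  obtain ⟨s, hsS, f, ⟨hf₁, hf₂⟩, hsf⟩ :=
    hS.exists_near_of_isFort hF (v := (a, c)) ⟨.inl rfl, .inl rfl⟩
  obtain ⟨hs₁, hs₂⟩ := eq_or_adj_of_eq_or_boxProd_adj hsf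
  refine ⟨s, hsS, ?_, ?_⟩
  · rcases hf₁ with hf | hf <;> rw [hf] at hs₁
    exacts [mem_leafStar_of_adj_isLeaf hxa ha hs₁, mem_leafStar_of_adj_isLeaf hxb hb hs₁]
  · rcases hf₂ with hf | hf <;> rw [hf] at hs₂
    exacts [mem_leafStar_of_adj_isLeaf hyc hc hs₂, mem_leafStar_of_adj_isLeaf hyd hd hs₂]

theorem le_pdNum {G : SimpleGraph V} [Fintype V] {n : ℕ}
    (h : ∀ S : Finset V, IsPDS G S → n ≤ S.card) : n ≤ pdNum G :=
  le_csInf ⟨_, Finset.univ, rfl, fun v => .mem v (Finset.mem_coe.mpr (Finset.mem_univ v))⟩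
    (by rintro _ ⟨S, rfl, hS⟩; exact h S hS)

theorem stmt10_general {V W : Type} [Fintype V] [Fintype W]
    (G : SimpleGraph V) (H : SimpleGraph W) :
    ssCount G * ssCount H ≤ pdNum (G.boxProd H) := by
  refine le_pdNum fun S hS => ?_
  choose f hfS hf₁ hf₂ using fun p : {x // IsStrongSupport G x} × {y // IsStrongSupport H y} =>
    hS.exists_mem_leafStar_prod p.1.2 p.2.2
  have hinj : Function.Injective fun p => (⟨f p, hfS p⟩ : S) := by
    rintro ⟨⟨x, hx⟩, ⟨y, hy⟩⟩ ⟨⟨x', hx'⟩, ⟨y', hy'⟩⟩ h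
    have hf : f (⟨x, hx⟩, ⟨y, hy⟩) = f (⟨x', hx'⟩, ⟨y', hy'⟩) := congrArg Subtype.val h
    have h₁ := hf₁ (⟨x', hx'⟩, ⟨y', hy'⟩)
    have h₂ := hf₂ (⟨x', hx'⟩, ⟨y', hy'⟩)
    rw [← hf] at h₁ h₂
    obtain rfl := eq_of_mem_leafStar hx.not_isLeaf hx'.not_isLeaf (hf₁ _) h₁
    obtain rfl := eq_of_mem_leafStar hy.not_isLeaf hy'.not_isLeaf (hf₂ _) h₂
    rfl
  simpa [ssCount, Nat.card_prod] using Nat.card_le_card_of_injective _ hinj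

theorem stmt10 {V W : Type} [Fintype V] [Fintype W]
    (G : SimpleGraph V) (H : SimpleGraph W)
    (hG : G.Connected) (hH : H.Connected) :
    ssCount G * ssCount H ≤ pdNum (G.boxProd H) :=
  stmt10_general G H

end PaperPD
end

section
/- If G is a connected graph with γ_P(G) = γ(G), then γ_P(G □ P_n) = γ(G) for every path P_n on n ≥ 1 vertices. -/
namespace PaperPD

open SimpleGraph

variable {V : Type} {W : Type}

/-!
Projecting to the first factor maps observation in `G □ H` to observation in `G`, so
`γ_P(G) ≤ γ_P(G □ P_n)`. Conversely, a dominating set of `G` placed in the layer over an end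
of the path observes that layer, and the layers then force one another along the path, so
`γ_P(G □ P_n) ≤ γ(G) · Z(P_n) = γ(G)`.
-/

theorem Observed.fst_boxProd {G : SimpleGraph V} {H : SimpleGraph W} {S : Set (V × W)}
    {p : V × W} (hp : Observed (G □ H) S p) : Observed G (Prod.fst '' S) p.1 := by
  induction hp with
  | mem p hp => exact Observed.mem _ ⟨p, hp, rfl⟩
  | dom p q hp hpq =>
    rcases boxProd_adj.1 hpq with ⟨hadj, -⟩ | ⟨-, hfst⟩
    · exact Observed.dom p.1 q.1 ⟨p, hp, rfl⟩ hadj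
    · exact hfst ▸ Observed.mem _ ⟨p, hp, rfl⟩
  | prop p q _ hpq _ ihp ihnbr =>
    rcases boxProd_adj.1 hpq with ⟨hadj, -⟩ | ⟨-, hfst⟩
    · refine Observed.prop p.1 q.1 ihp hadj fun y hy hyq => ?_
      exact ihnbr (y, p.2) (boxProd_adj_left.2 hy) fun h => hyq (by rw [← h])
    · exact hfst ▸ ihp

theorem IsPDS.image_fst [Nonempty W] {G : SimpleGraph V} {H : SimpleGraph W} {S : Set (V × W)}
    (hS : IsPDS (G □ H) S) : IsPDS G (Prod.fst '' S) :=
  fun v => (hS (v, Classical.arbitrary W)).fst_boxProd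

/-- Each force `u → v` in `H` lifts to the forces `(x, u) → (x, v)` in `G □ H`. -/
theorem Forced.observed_boxProd {G : SimpleGraph V} {H : SimpleGraph W} {D : Set V}
    (hD : ∀ v, ∃ u ∈ D, v = u ∨ G.Adj u v) {B : Set W} {w : W} (hw : Forced H B w) (x : V) :
    Observed (G □ H) (D ×ˢ B) (x, w) := by
  induction hw generalizing x with
  | mem b hb =>
    obtain ⟨u, hu, rfl | hux⟩ := hD x
    · exact Observed.mem _ ⟨hu, hb⟩
    · exact Observed.dom (u, b) _ ⟨hu, hb⟩ (boxProd_adj_left.2 hux)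
  | prop u v _ huv _ ihu ihnbr =>
    refine Observed.prop (x, u) (x, v) (ihu x) (boxProd_adj_right.2 huv) ?_
    rintro ⟨y, w⟩ hadj hne
    rcases boxProd_adj.1 hadj with ⟨-, rfl⟩ | ⟨huw, rfl⟩
    · exact ihu y
    · exact ihnbr w huw (fun h => hne (h ▸ rfl)) x

theorem forced_pathGraph_zero (n : ℕ) (i : Fin (n + 1)) : Forced (pathGraph (n + 1)) {0} i := by
  suffices ∀ j ≤ i, Forced (pathGraph (n + 1)) {0} j from this i le_rfl
  induction i using Fin.induction with
  | zero => exact fun j hj => Forced.mem j (Fin.le_zero_iff.1 hj)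
  | succ i ih =>
    intro j hj
    rcases hj.lt_or_eq with hj | rfl
    · exact ih j (Fin.le_castSucc_iff.2 hj)
    · refine Forced.prop i.castSucc i.succ (ih _ le_rfl) (pathGraph_adj.2 (Or.inl rfl)) ?_
      intro w hw hne
      apply ih
      rcases pathGraph_adj.1 hw with h | h
      · exact absurd (Fin.ext (by simpa using h.symm)) hne
      · exact Fin.le_iff_val_le_val.2 (by omega)

section Numbers

variable [Fintype V] [Fintype W] (G : SimpleGraph V) (H : SimpleGraph W)

theorem pdNum_le_card {S : Finset V} (hS : IsPDS G S) : pdNum G ≤ S.card :=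
  Nat.sInf_le ⟨S, rfl, hS⟩

theorem exists_isPDS_card_eq_pdNum : ∃ S : Finset V, S.card = pdNum G ∧ IsPDS G S :=
  Nat.sInf_mem (s := {n | ∃ S : Finset V, S.card = n ∧ IsPDS G ↑S})
    ⟨_, Finset.univ, rfl, fun v => Observed.mem v (Finset.mem_coe.2 (Finset.mem_univ v))⟩

theorem exists_dominating_card_eq_domNum :
    ∃ D : Finset V, D.card = domNum G ∧ ∀ v, ∃ u ∈ D, v = u ∨ G.Adj u v :=
  Nat.sInf_mem (s := {n | ∃ D : Finset V, D.card = n ∧ ∀ v, ∃ u ∈ D, v = u ∨ G.Adj u v})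
    ⟨_, Finset.univ, rfl, fun v => ⟨v, Finset.mem_univ v, Or.inl rfl⟩⟩

theorem pdNum_le_pdNum_boxProd [Nonempty W] : pdNum G ≤ pdNum (G □ H) := by
  classical
  obtain ⟨S, hcard, hS⟩ := exists_isPDS_card_eq_pdNum (G □ H)
  calc pdNum G ≤ (S.image Prod.fst).card := pdNum_le_card G (by simpa using hS.image_fst)
    _ ≤ S.card := Finset.card_image_le
    _ = pdNum (G □ H) := hcard

theorem pdNum_boxProd_le_domNum_mul {B : Finset W} (hB : ∀ w, Forced H B w) :
    pdNum (G □ H) ≤ domNum G * B.card := by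
  obtain ⟨D, hcard, hD⟩ := exists_dominating_card_eq_domNum G
  calc pdNum (G □ H) ≤ (D ×ˢ B).card := by
        refine pdNum_le_card _ ?_
        rw [Finset.coe_product]
        exact fun p => (hB p.2).observed_boxProd hD p.1
    _ = domNum G * B.card := by rw [Finset.card_product, hcard]

end Numbers

theorem stmt14_general {V : Type} [Fintype V] (G : SimpleGraph V)
    (he : pdNum G = domNum G)
    (n : ℕ) (hn : 1 ≤ n) :
    pdNum (G.boxProd (SimpleGraph.pathGraph n)) = domNum G := by
  obtain ⟨m, rfl⟩ : ∃ m, n = m + 1 := ⟨n - 1, by omega⟩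
  refine le_antisymm ?_ (he ▸ pdNum_le_pdNum_boxProd G _)
  simpa using pdNum_boxProd_le_domNum_mul G (pathGraph (m + 1)) (B := {0})
    (by simpa using forced_pathGraph_zero m)

theorem stmt14 {V : Type} [Fintype V] (G : SimpleGraph V)
    (hG : G.Connected) (he : pdNum G = domNum G)
    (n : ℕ) (hn : 1 ≤ n) :
    pdNum (G.boxProd (SimpleGraph.pathGraph n)) = domNum G :=
  stmt14_general G he n hn

end PaperPD
end
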